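/- For every n ≥ 1, the iterated commutator subgroups [D,ₙG₁], [L₁,ₙG₁] and [L₂,ₙG₂] are normal subgroups of the weak commutativity group χ(G). -/

import Mathlib

/-!
In `χ(G)` the relations `[g, g^φ] = 1` give Sidki's identities `⁅g, h^φ⁆ = ⁅g^φ, h⁆` and
`⁅g, h^φ⁆^k = ⁅g, h^φ⁆^(k^φ)`, so `D` and `L` centralize each other.
If `X ⊴ χ(G)` and `K` centralizes `X`, then `⁅X, H⁆ = ⁅X, H ⊔ C(X)⁆`, which is normal as soon as
`H ⊔ K` is. For `X ≤ D` take `(H, K) = (G₁, L)`, where `G₁ ⊔ L = χ(G)`; for `X ≤ L` take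
`(H, K) = (Gᵢ, D)`, where `Gᵢ ⊔ D` is normal because `G₁ ⊔ G₂ = χ(G)`. Since `⁅X, H⁆ ≤ X` for normal
`X`, induction on `n` stays inside `D`, resp. `L`.
-/

open Subgroup

/-- The weak commutativity relations inside the free product `G ∗ G`. -/
def chiRel (G : Type*) [Group G] : Subgroup (Monoid.Coprod G G) :=
  Subgroup.normalClosure
    {x | ∃ g : G, x = Monoid.Coprod.inl g * Monoid.Coprod.inr g *
      (Monoid.Coprod.inl g)⁻¹ * (Monoid.Coprod.inr g)⁻¹}

instance chiRel_normal (G : Type*) [Group G] : (chiRel G).Normal :=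
  Subgroup.normalClosure_normal

/-- The weak commutativity group `χ(G)`. -/
def Chi (G : Type*) [Group G] : Type _ := Monoid.Coprod G G ⧸ chiRel G

instance (G : Type*) [Group G] : Group (Chi G) :=
  inferInstanceAs (Group (Monoid.Coprod G G ⧸ chiRel G))

/-- The canonical map `G → χ(G)`, `g ↦ g`. -/
def chiIota1 (G : Type*) [Group G] : G →* Chi G :=
  (QuotientGroup.mk' (chiRel G)).comp Monoid.Coprod.inl

/-- The canonical map `G → χ(G)`, `g ↦ g^φ`. -/
def chiIota2 (G : Type*) [Group G] : G →* Chi G :=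
  (QuotientGroup.mk' (chiRel G)).comp Monoid.Coprod.inr

/-- `G₁ ≤ χ(G)`. -/
def chiG1 (G : Type*) [Group G] : Subgroup (Chi G) := (chiIota1 G).range

/-- `G₂ = G^φ ≤ χ(G)`. -/
def chiG2 (G : Type*) [Group G] : Subgroup (Chi G) := (chiIota2 G).range

/-- `L = ⟨g⁻¹ g^φ : g ∈ G⟩`. -/
def chiL (G : Type*) [Group G] : Subgroup (Chi G) :=
  Subgroup.closure {x | ∃ g : G, x = (chiIota1 G g)⁻¹ * chiIota2 G g}

/-- `D = ⁅G₁, G₂⁆`. -/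
def chiD (G : Type*) [Group G] : Subgroup (Chi G) := ⁅chiG1 G, chiG2 G⁆

/-- `L₁ = ⁅L, G₁⁆`. -/
def chiL1 (G : Type*) [Group G] : Subgroup (Chi G) := ⁅chiL G, chiG1 G⁆

/-- `L₂ = ⁅L, G₂⁆`. -/
def chiL2 (G : Type*) [Group G] : Subgroup (Chi G) := ⁅chiL G, chiG2 G⁆

/-- `R = ⁅⁅G₁, L⁆, G₂⁆`. -/
def chiR (G : Type*) [Group G] : Subgroup (Chi G) := ⁅⁅chiG1 G, chiL G⁆, chiG2 G⁆

/-- `L₁₂ = ⁅L₁, L₂⁆`. -/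
def chiL12 (G : Type*) [Group G] : Subgroup (Chi G) := ⁅chiL1 G, chiL2 G⁆
/-- Iterated commutator subgroup: `[A,₀B] = A`, `[A,ₙ₊₁B] = ⁅[A,ₙB], B⁆`. -/
def iterComm {H : Type*} [Group H] (A B : Subgroup H) : ℕ → Subgroup H
  | 0 => A
  | n + 1 => ⁅iterComm A B n, B⁆

open scoped commutatorElement

namespace Subgroup

variable {P : Type*} [Group P]

theorem normal_of_sup_eq_top_of_le_normalizer {A B X : Subgroup P} (hAB : A ⊔ B = ⊤)
    (hA : A ≤ normalizer (X : Set P)) (hB : B ≤ normalizer (X : Set P)) : X.Normal :=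
  normalizer_eq_top_iff.mp (top_le_iff.mp (hAB ▸ sup_le hA hB))

theorem commutator_normal_of_sup_eq_top {A B : Subgroup P} (hAB : A ⊔ B = ⊤) :
    ⁅A, B⁆.Normal :=
  normal_of_sup_eq_top_of_le_normalizer hAB (normalizer_commutator_ge_left A B)
    (normalizer_commutator_ge_right A B)

theorem sup_commutator_normal_of_sup_eq_top {A B : Subgroup P} (hAB : A ⊔ B = ⊤) :
    (A ⊔ ⁅A, B⁆).Normal := by
  refine normal_of_sup_eq_top_of_le_normalizer hAB
    ((le_inf le_normalizer (normalizer_commutator_ge_left A B)).trans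
      (normalizer_inf_normalizer_le_normalizer_sup _ _)) ?_
  rw [sup_eq_closure, le_normalizer_closure_iff, ← sup_eq_closure]
  rintro b hb g (hg | hg)
  · rw [← MulAut.conj_apply, conj_eq_commutatorElement_mul, commutator_comm]
    exact mul_mem (mem_sup_right (commutator_mem_commutator hb hg)) (mem_sup_left hg)
  · exact mem_sup_right ((normalizer_commutator_ge_right A B hb g).mp hg)

theorem commutator_sup_centralizer (X H : Subgroup P) [X.Normal] :
    ⁅X, H ⊔ centralizer X⁆ = ⁅X, H⁆ := by
  refine le_antisymm (commutator_le.mpr fun x hx y hy => ?_) (commutator_mono le_rfl le_sup_left)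
  obtain ⟨h, hh, c, hc, rfl⟩ := mem_sup_of_normal_right.mp hy
  have hxc : ⁅x, c⁆ = 1 := Commute.commutator_eq (mem_centralizer_iff.mp hc x hx)
  rw [commutatorElement_mul_right_eq_mul_conj, hxc, mul_one, mul_inv_cancel_right]
  exact commutator_mem_commutator hx hh

theorem commutator_normal_of_le_centralizer {X H K : Subgroup P} [X.Normal]
    (hK : K ≤ centralizer X) (hHK : (H ⊔ K).Normal) : ⁅X, H⁆.Normal := by
  have hsup : H ⊔ centralizer X = H ⊔ K ⊔ centralizer X := by
    rw [sup_assoc, sup_eq_right.mpr hK]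
  rw [← commutator_sup_centralizer, hsup]
  infer_instance

theorem Normal.normal_iterComm {A B : Subgroup P} (hA : A.Normal)
    (hstep : ∀ X ≤ A, X.Normal → ⁅X, B⁆.Normal) (n : ℕ) : (iterComm A B n).Normal := by
  suffices ∀ n, (iterComm A B n).Normal ∧ iterComm A B n ≤ A from (this n).1
  intro n
  induction n with
  | zero => exact ⟨hA, le_rfl⟩
  | succ n ih =>
    have := ih.1
    exact ⟨hstep _ ih.2 ih.1, (commutator_le_left _ _).trans ih.2⟩

end Subgroup

section WeakCommutativity

variable {P : Type*} [Group P]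

theorem conj_commutator_eq_of_commute {a b a' b' : P} (ha : Commute a a') (hb : Commute b b')
    (hab : Commute (a * b) (a' * b')) : a' * ⁅a, b'⁆ * a'⁻¹ = a * ⁅a', b⁆ * a⁻¹ := by
  have h := hab.commutator_eq
  rw [commutatorElement_mul_left_eq_conj_mul, commutatorElement_mul_right_eq_mul_conj,
    commutatorElement_mul_right_eq_mul_conj, hb.commutator_eq, ha.commutator_eq, mul_one,
    mul_inv_cancel_right, one_mul] at h
  rw [eq_inv_of_mul_eq_one_right h, ← commutatorElement_inv]
  simp only [mul_inv_rev, inv_inv, mul_assoc]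

variable {G : Type*} [Group G] {x y : G →* P}

theorem conj_commutator_eq_conj_commutator_swap (hxy : ∀ g, Commute (x g) (y g)) (g h : G) :
    y g * ⁅x g, y h⁆ * (y g)⁻¹ = x g * ⁅y g, x h⁆ * (x g)⁻¹ :=
  conj_commutator_eq_of_commute (hxy g) (hxy h) (by simpa only [map_mul] using hxy (g * h))

theorem commutator_eq_commutator_swap (hxy : ∀ g, Commute (x g) (y g)) (g h : G) :
    ⁅x g, y h⁆ = ⁅y g, x h⁆ := by
  have h := conj_commutator_eq_conj_commutator_swap hxy g (g⁻¹ * h)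
  rw [map_mul, map_mul, map_inv, map_inv, commutatorElement_mul_right_eq_mul_conj,
    commutatorElement_mul_right_eq_mul_conj, (hxy g).inv_right.commutator_eq,
    (hxy g).symm.inv_right.commutator_eq] at h
  simpa only [one_mul, mul_assoc, mul_inv_cancel_left, inv_inv, mul_inv_cancel, mul_one] using h

theorem commute_commutator_inv_mul (hxy : ∀ g, Commute (x g) (y g)) (g h k : G) :
    Commute ⁅x g, y h⁆ ((x k)⁻¹ * y k) := by
  have e := commutator_eq_commutator_swap hxy g (k * h)
  rw [map_mul, map_mul, commutatorElement_mul_right_eq_mul_conj,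
    commutatorElement_mul_right_eq_mul_conj, ← commutator_eq_commutator_swap hxy g k,
    ← commutator_eq_commutator_swap hxy g h] at e
  simp only [mul_assoc, mul_right_inj] at e
  have hconj : x k * ⁅x g, y h⁆ * (x k)⁻¹ = y k * ⁅x g, y h⁆ * (y k)⁻¹ := by
    simpa only [mul_assoc] using e.symm
  calc ⁅x g, y h⁆ * ((x k)⁻¹ * y k) = (x k)⁻¹ * (x k * ⁅x g, y h⁆ * (x k)⁻¹) * y k := by group
    _ = (x k)⁻¹ * (y k * ⁅x g, y h⁆ * (y k)⁻¹) * y k := by rw [hconj]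
    _ = (x k)⁻¹ * y k * ⁅x g, y h⁆ := by group

theorem commutator_range_le_centralizer_closure (hxy : ∀ g, Commute (x g) (y g)) :
    ⁅x.range, y.range⁆ ≤ centralizer (closure {z | ∃ g, z = (x g)⁻¹ * y g}) := by
  rw [commutator_le, centralizer_closure]
  rintro _ ⟨g, rfl⟩ _ ⟨h, rfl⟩ _ ⟨k, rfl⟩
  exact (commute_commutator_inv_mul hxy g h k).symm

theorem range_le_normalizer_closure_inv_mul (hxy : ∀ g, Commute (x g) (y g)) :
    x.range ≤ normalizer (closure {z | ∃ g, z = (x g)⁻¹ * y g} : Set P) := by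
  rw [le_normalizer_closure_iff]
  rintro _ ⟨k, rfl⟩ _ ⟨m, rfl⟩
  have e : x k * ((x m)⁻¹ * y m) * (x k)⁻¹
      = (x (m * k⁻¹))⁻¹ * y (m * k⁻¹) * ((x k)⁻¹ * y k) := by
    rw [map_mul, map_mul, map_inv, map_inv, (hxy k).inv_left.eq]
    group
  rw [e]
  exact mul_mem (subset_closure ⟨_, rfl⟩) (subset_closure ⟨_, rfl⟩)

end WeakCommutativity

section Chi

variable (G : Type*) [Group G]

theorem chiIota_commute (g : G) : Commute (chiIota1 G g) (chiIota2 G g) := by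
  rw [← commutatorElement_eq_one_iff_commute]
  exact (QuotientGroup.eq_one_iff _).mpr (subset_normalClosure ⟨g, rfl⟩)

theorem chiG1_sup_chiG2 : chiG1 G ⊔ chiG2 G = ⊤ :=
  (Monoid.Coprod.range_eq (QuotientGroup.mk' (chiRel G))).symm.trans
    (MonoidHom.range_eq_top.mpr (QuotientGroup.mk'_surjective _))

theorem chiG1_sup_chiL : chiG1 G ⊔ chiL G = ⊤ := by
  refine top_le_iff.mp ((chiG1_sup_chiG2 G).ge.trans (sup_le le_sup_left ?_))
  rintro _ ⟨g, rfl⟩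
  rw [← mul_inv_cancel_left (chiIota1 G g) (chiIota2 G g)]
  exact mul_mem (mem_sup_left ⟨g, rfl⟩) (mem_sup_right (subset_closure ⟨g, rfl⟩))

instance chiD_normal : (chiD G).Normal :=
  commutator_normal_of_sup_eq_top (chiG1_sup_chiG2 G)

instance chiL_normal : (chiL G).Normal :=
  normal_of_sup_eq_top_of_le_normalizer (chiG1_sup_chiL G)
    (range_le_normalizer_closure_inv_mul (chiIota_commute G)) le_normalizer

theorem chiD_le_centralizer_chiL : chiD G ≤ centralizer (chiL G) :=
  commutator_range_le_centralizer_closure (chiIota_commute G)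

variable {G}

theorem commutator_chiG1_normal_of_le_chiD {X : Subgroup (Chi G)} (hXD : X ≤ chiD G)
    (hX : X.Normal) : ⁅X, chiG1 G⁆.Normal :=
  commutator_normal_of_le_centralizer
    ((le_centralizer_iff.mp (chiD_le_centralizer_chiL G)).trans (centralizer_le hXD))
    (by rw [chiG1_sup_chiL]; infer_instance)

theorem commutator_chiG1_normal_of_le_chiL {X : Subgroup (Chi G)} (hXL : X ≤ chiL G)
    (hX : X.Normal) : ⁅X, chiG1 G⁆.Normal :=
  commutator_normal_of_le_centralizer ((chiD_le_centralizer_chiL G).trans (centralizer_le hXL))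
    (sup_commutator_normal_of_sup_eq_top (chiG1_sup_chiG2 G))

theorem commutator_chiG2_normal_of_le_chiL {X : Subgroup (Chi G)} (hXL : X ≤ chiL G)
    (hX : X.Normal) : ⁅X, chiG2 G⁆.Normal := by
  refine commutator_normal_of_le_centralizer
    ((chiD_le_centralizer_chiL G).trans (centralizer_le hXL)) ?_
  rw [chiD, commutator_comm]
  exact sup_commutator_normal_of_sup_eq_top (sup_comm (chiG1 G) _ ▸ chiG1_sup_chiG2 G)

end Chi

theorem iterComm_normal_general (G : Type*) [Group G] (n : ℕ) :
    (iterComm (chiD G) (chiG1 G) n).Normal ∧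
    (iterComm (chiL1 G) (chiG1 G) n).Normal ∧
    (iterComm (chiL2 G) (chiG2 G) n).Normal := by
  refine ⟨(chiD_normal G).normal_iterComm (fun _ => commutator_chiG1_normal_of_le_chiD) n, ?_, ?_⟩
  · exact (commutator_chiG1_normal_of_le_chiL le_rfl (chiL_normal G)).normal_iterComm
      (fun X hX => commutator_chiG1_normal_of_le_chiL (hX.trans (commutator_le_left _ _))) n
  · exact (commutator_chiG2_normal_of_le_chiL le_rfl (chiL_normal G)).normal_iterComm
      (fun X hX => commutator_chiG2_normal_of_le_chiL (hX.trans (commutator_le_left _ _))) n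

theorem iterComm_normal (G : Type*) [Group G] (n : ℕ) (hn : 1 ≤ n) :
    (iterComm (chiD G) (chiG1 G) n).Normal ∧
    (iterComm (chiL1 G) (chiG1 G) n).Normal ∧
    (iterComm (chiL2 G) (chiG2 G) n).Normal :=
  iterComm_normal_general G n
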